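/- arXiv:solv-int/9909004 — 9 statements merged into one kernel-verified Lean document; each statement's English description precedes it below -/
import Mathlib

section
/- Let a ∈ ℂ, let U ⊆ ℂ³ be an open set on which a differentiable function f : U → ℂ satisfies f(x)³·x₁x₂x₃ = 1 (so each x_k ≠ 0 on U), and set J̃_k(J,x) = J_k + i·a·f(x)·x_k for k = 1,2,3. Then: (i) for every (J,x) ∈ ℂ³ × U with x₁² + x₂² + x₃² = 0 and every i,j, the Lie–Poisson bracket satisfies {J̃_i, J̃_j}(J,x) = Σ_k ε_{ijk} J̃_k(J,x); (ii) for every (J,x) ∈ ℂ³ × U and every i,j, {J̃_i, x_j}(J,x) = Σ_k ε_{ijk} x_k. In other words, on the level set (x,x) = 0 the shift J ↦ J + i a (x₁x₂x₃)^{-1/3} x preserves the e(3,ℂ) Lie–Poisson bracket relations. -/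
/-- The Levi-Civita symbol on `Fin 3`: totally antisymmetric with `eps 0 1 2 = 1`. -/
def eps (i j k : Fin 3) : ℤ :=
  (((j : ℤ) - (i : ℤ)) * ((k : ℤ) - (i : ℤ)) * ((k : ℤ) - (j : ℤ))) / 2

/-- Partial derivative of `F(J,x)` with respect to `J_i`. -/
noncomputable def pdJ (F : (Fin 3 → ℂ) × (Fin 3 → ℂ) → ℂ)
    (p : (Fin 3 → ℂ) × (Fin 3 → ℂ)) (i : Fin 3) : ℂ :=
  fderiv ℂ F p (Pi.single i 1, 0)

/-- Partial derivative of `F(J,x)` with respect to `x_i`. -/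
noncomputable def pdx (F : (Fin 3 → ℂ) × (Fin 3 → ℂ) → ℂ)
    (p : (Fin 3 → ℂ) × (Fin 3 → ℂ)) (i : Fin 3) : ℂ :=
  fderiv ℂ F p (0, Pi.single i 1)

/-- The Lie–Poisson bracket of `e(3,ℂ)` on functions of `(J,x) ∈ ℂ³ × ℂ³`:
`{F,G} = Σ_{i,j,k} ε_{ijk} [ J_k F_{J_i} G_{J_j} + x_k (F_{J_i} G_{x_j} + F_{x_i} G_{J_j}) ]`. -/
noncomputable def e3Bracket (F G : (Fin 3 → ℂ) × (Fin 3 → ℂ) → ℂ)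
    (p : (Fin 3 → ℂ) × (Fin 3 → ℂ)) : ℂ :=
  ∑ i : Fin 3, ∑ j : Fin 3, ∑ k : Fin 3,
    (eps i j k : ℂ) *
      (p.1 k * pdJ F p i * pdJ G p j +
       p.2 k * (pdJ F p i * pdx G p j + pdx F p i * pdJ G p j))

/-- The shifted angular momentum `J̃_k(J,x) = J_k + i·a·f(x)·x_k`,
where `f` is a branch of `(x₁x₂x₃)^{-1/3}`. -/
noncomputable def Jtilde (a : ℂ) (f : (Fin 3 → ℂ) → ℂ) (k : Fin 3) :
    (Fin 3 → ℂ) × (Fin 3 → ℂ) → ℂ :=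
  fun p => p.1 k + Complex.I * a * f p.2 * p.2 k


/-! Differentiating `f³ · x₁x₂x₃ = 1` along the radial direction gives Euler's identity
`x · ∇f = -f` (the product is homogeneous of degree 3). Expanding the bracket with
`∂J̃_k/∂x_m = i a (f δ_km + x_k ∂_m f)`, the double cross product `(∇f × x) × x` shows that
`{J̃_i, J̃_j}` differs from `ε_ijk J̃_k` by `i a ε_ijk (x_k (f + x · ∇f) - (x · x) ∂_k f)`, which
vanishes by Euler's identity and `(x, x) = 0`. The relation `{J̃_i, x_j} = ε_ijk x_k` only sees
the `J`-derivatives of `J̃_i`. -/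

open Filter Topology

local notation "ℂ³" => Fin 3 → ℂ

section ShiftedMomentum

variable (a : ℂ) {f : ℂ³ → ℂ} {x : ℂ³} (J : ℂ³)

theorem hasFDerivAt_fst_apply (k : Fin 3) (p : ℂ³ × ℂ³) :
    HasFDerivAt (fun p : ℂ³ × ℂ³ => p.1 k)
      ((ContinuousLinearMap.proj k).comp (ContinuousLinearMap.fst ℂ ℂ³ ℂ³)) p :=
  ((ContinuousLinearMap.proj k).comp (ContinuousLinearMap.fst ℂ ℂ³ ℂ³)).hasFDerivAt

theorem hasFDerivAt_snd_apply (k : Fin 3) (p : ℂ³ × ℂ³) :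
    HasFDerivAt (fun p : ℂ³ × ℂ³ => p.2 k)
      ((ContinuousLinearMap.proj k).comp (ContinuousLinearMap.snd ℂ ℂ³ ℂ³)) p :=
  ((ContinuousLinearMap.proj k).comp (ContinuousLinearMap.snd ℂ ℂ³ ℂ³)).hasFDerivAt

theorem hasFDerivAt_Jtilde (hf : DifferentiableAt ℂ f x) (k : Fin 3) :
    HasFDerivAt (Jtilde a f k)
      ((ContinuousLinearMap.proj k).comp (ContinuousLinearMap.fst ℂ ℂ³ ℂ³) +
        (Complex.I * a) •
          (f x • (ContinuousLinearMap.proj k).comp (ContinuousLinearMap.snd ℂ ℂ³ ℂ³) +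
          x k • (fderiv ℂ f x).comp (ContinuousLinearMap.snd ℂ ℂ³ ℂ³))) (J, x) := by
  have hfx : HasFDerivAt (fun p : ℂ³ × ℂ³ => f p.2)
      ((fderiv ℂ f x).comp (ContinuousLinearMap.snd ℂ ℂ³ ℂ³)) (J, x) :=
    hf.hasFDerivAt.comp (J, x) hasFDerivAt_snd
  have hJtilde : Jtilde a f k = fun p => p.1 k + Complex.I * a * (f p.2 * p.2 k) := by
    funext p; simp only [Jtilde, mul_assoc]
  rw [hJtilde]
  exact (hasFDerivAt_fst_apply k (J, x)).add
    ((hfx.mul (hasFDerivAt_snd_apply k (J, x))).const_mul (Complex.I * a))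

theorem pdJ_Jtilde (hf : DifferentiableAt ℂ f x) (k i : Fin 3) :
    pdJ (Jtilde a f k) (J, x) i = Pi.single (M := fun _ => ℂ) i 1 k := by
  simp [pdJ, (hasFDerivAt_Jtilde a J hf k).fderiv]

theorem pdx_Jtilde (hf : DifferentiableAt ℂ f x) (k i : Fin 3) :
    pdx (Jtilde a f k) (J, x) i = Complex.I * a *
      (f x * Pi.single (M := fun _ => ℂ) i 1 k + x k * fderiv ℂ f x (Pi.single i 1)) := by
  simp [pdx, (hasFDerivAt_Jtilde a J hf k).fderiv, mul_add]

theorem pdJ_snd_apply (p : ℂ³ × ℂ³) (k i : Fin 3) :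
    pdJ (fun p => p.2 k) p i = 0 := by
  simp [pdJ, (hasFDerivAt_snd_apply k p).fderiv]

theorem pdx_snd_apply (p : ℂ³ × ℂ³) (k i : Fin 3) :
    pdx (fun p => p.2 k) p i = Pi.single (M := fun _ => ℂ) i 1 k := by
  simp [pdx, (hasFDerivAt_snd_apply k p).fderiv]

theorem fderiv_apply_self_eq_neg_of_cube_mul_prod_eq_one
    (hf : DifferentiableAt ℂ f x) (h : ∀ᶠ y in 𝓝 x, f y ^ 3 * (y 0 * y 1 * y 2) = 1) :
    fderiv ℂ f x x = -f x := by
  have hprod := ((hasFDerivAt_apply (𝕜 := ℂ) 0 x).mul (hasFDerivAt_apply 1 x)).mul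
    (hasFDerivAt_apply 2 x)
  have hcube_prod := (hf.hasFDerivAt.pow 3).mul hprod
  have hcube_prod_zero := hcube_prod.unique ((hasFDerivAt_const (1 : ℂ) x).congr_of_eventuallyEq h)
  have hradial := congrArg (fun L => L x) hcube_prod_zero
  simp only [Pi.mul_apply, smul_add, Nat.add_one_sub_one, nsmul_eq_mul, Nat.cast_ofNat,
    add_apply, smul_apply, ContinuousLinearMap.proj_apply,
    smul_eq_mul, zero_apply] at hradial
  have hfx : f x ^ 3 * (x 0 * x 1 * x 2) = 1 := h.self_of_nhds
  linear_combination (f x / 3) * hradial - (fderiv ℂ f x x + f x) * hfx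

theorem e3Bracket_Jtilde_snd (hf : DifferentiableAt ℂ f x) (i j : Fin 3) :
    e3Bracket (Jtilde a f i) (fun p => p.2 j) (J, x) = ∑ k, (eps i j k : ℂ) * x k := by
  simp [e3Bracket, pdJ_Jtilde a J hf, pdJ_snd_apply, pdx_snd_apply, Pi.single_apply]

theorem e3Bracket_Jtilde_Jtilde (hf : DifferentiableAt ℂ f x) (i j : Fin 3) :
    e3Bracket (Jtilde a f i) (Jtilde a f j) (J, x) = ∑ k, (eps i j k : ℂ) *
      (Jtilde a f k (J, x) + Complex.I * a * (x k * (f x + fderiv ℂ f x x) -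
        (x 0 ^ 2 + x 1 ^ 2 + x 2 ^ 2) * fderiv ℂ f x (Pi.single k 1))) := by
  have hradial : fderiv ℂ f x x = ∑ m, x m * fderiv ℂ f x (Pi.single m 1) := by
    calc fderiv ℂ f x x = fderiv ℂ f x (∑ m, x m • Pi.single m 1) := by
          rw [← pi_eq_sum_univ' x]
      _ = _ := by simp only [map_sum, map_smul, smul_eq_mul]
  rw [hradial]
  simp only [e3Bracket, pdJ_Jtilde a J hf, pdx_Jtilde a J hf, Jtilde, Fin.sum_univ_three]
  -- evaluate the Levi-Civita symbols and Kronecker deltas, leaving a polynomial identity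
  fin_cases i <;> fin_cases j <;>
    simp only [eps, Fin.isValue, Fin.zero_eta, Fin.mk_one, Fin.reduceFinMk, Fin.val_zero,
      Fin.val_one, Fin.val_two, Nat.cast_zero, Nat.cast_one, Nat.cast_ofNat, Int.reduceSub,
      Int.reduceMul, Int.reduceDiv, Int.cast_zero, Int.cast_one, Int.cast_neg, Pi.single_apply,
      Fin.reduceEq, ↓reduceIte] <;>
    ring

end ShiftedMomentum

/-- On the zero level set `(x,x) = 0` of the first Casimir, the shift
`J ↦ J̃ = J + i a (x₁x₂x₃)^{-1/3} x` preserves the `e(3,ℂ)` Lie–Poisson bracket relations: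
`{J̃_i, J̃_j} = Σ_k ε_{ijk} J̃_k` holds on `(x,x) = 0`, and `{J̃_i, x_j} = Σ_k ε_{ijk} x_k`
holds everywhere, i.e. the shift is an outer automorphism of the representation. -/
theorem shift_is_outer_automorphism
    (a : ℂ) (U : Set (Fin 3 → ℂ)) (hU : IsOpen U)
    (f : (Fin 3 → ℂ) → ℂ) (hf : DifferentiableOn ℂ f U)
    (hf3 : ∀ x ∈ U, f x ^ 3 * (x 0 * x 1 * x 2) = 1) :
    (∀ (J : Fin 3 → ℂ) (x : Fin 3 → ℂ), x ∈ U →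
      x 0 ^ 2 + x 1 ^ 2 + x 2 ^ 2 = 0 →
      ∀ i j : Fin 3,
        e3Bracket (Jtilde a f i) (Jtilde a f j) (J, x) =
          ∑ k : Fin 3, (eps i j k : ℂ) * Jtilde a f k (J, x)) ∧
    (∀ (J : Fin 3 → ℂ) (x : Fin 3 → ℂ), x ∈ U →
      ∀ i j : Fin 3,
        e3Bracket (Jtilde a f i) (fun p => p.2 j) (J, x) =
          ∑ k : Fin 3, (eps i j k : ℂ) * x k) := by
  have hdiff : ∀ x ∈ U, DifferentiableAt ℂ f x := fun x hx =>
    hf.differentiableAt (hU.mem_nhds hx)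
  have heuler : ∀ x ∈ U, fderiv ℂ f x x = -f x := fun x hx =>
    fderiv_apply_self_eq_neg_of_cube_mul_prod_eq_one (hdiff x hx)
      (eventually_of_mem (hU.mem_nhds hx) hf3)
  refine ⟨fun J x hx hnull i j => ?_,
    fun J x hx i j => e3Bracket_Jtilde_snd a J (hdiff x hx) i j⟩
  rw [e3Bracket_Jtilde_Jtilde a J (hdiff x hx), heuler x hx, hnull]
  simp only [add_neg_cancel, mul_zero, zero_mul, sub_zero, add_zero]
end

section
/- Let a ∈ ℂ, let U ⊆ ℂ³ be an open set on which a differentiable function f : U → ℂ satisfies f(x)³·x₁x₂x₃ = 1, and set J̃_k(J,x) = J_k + i·a·f(x)·x_k. Define H̃(J,x) = J̃₁² + J̃₂² + J̃₃² and K̃(J,x) = J̃₁ J̃₂ J̃₃. Then for every (J,x) ∈ ℂ³ × U lying on the zero level set of the first Casimir, x₁² + x₂² + x₃² = 0, the Lie–Poisson bracket of H̃ and K̃ vanishes: {H̃, K̃}(J,x) = 0. That is, the deformation of the spherical top obtained from the shift J ↦ J + i a (x₁x₂x₃)^{-1/3} x is completely integrable on the family of orbits with c₁ = 0. -/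
/-!
Write `c = i a`, `T = J̃ = J + c f(x) x` and `[u, v, w] = w ⬝ᵥ (u ⨯₃ v)`. For `H̃ = |T|²` and any
`K̃ = Ψ(T)` with `B = ∇Ψ(T)`, the chain rule reduces the bracket to
`{H̃, K̃} = 2c (f [T, B, x] + (B ⬝ᵥ x) [T, ∇f, x] + (T ⬝ᵥ x) [∇f, B, x])`, the term `T ⬝ᵥ (T ⨯₃ B)`
having dropped out. Differentiating `f³ x₁x₂x₃ = 1` gives `3 xᵢ ∂ᵢf = -f`, hence Euler's relation
`∇f ⬝ᵥ x = -f`, and the identity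
`[u, v, w] (x ⬝ᵥ x) = (w ⬝ᵥ x) [u, v, x] - (u ⬝ᵥ x) [w, v, x] - (v ⬝ᵥ x) [u, w, x]`
with `w = ∇f` turns the bracket into `-2c [T, B, ∇f] (x ⬝ᵥ x)`, which vanishes when `c₁ = 0`.
-/

open Filter Topology

section CoordGrad

variable {𝕜 ι : Type*} [NontriviallyNormedField 𝕜] [Fintype ι] [DecidableEq ι]

noncomputable def coordGrad (φ : (ι → 𝕜) → 𝕜) (v : ι → 𝕜) : ι → 𝕜 :=
  fun i => fderiv 𝕜 φ v (Pi.single i 1)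

theorem fderiv_apply_eq_coordGrad_dotProduct (φ : (ι → 𝕜) → 𝕜) (v w : ι → 𝕜) :
    fderiv 𝕜 φ v w = coordGrad φ v ⬝ᵥ w := by
  conv_lhs => rw [← Finset.univ_sum_single w]
  simp only [map_sum, coordGrad, dotProduct]
  refine Finset.sum_congr rfl fun j _ => ?_
  rw [show Pi.single j (w j) = w j • Pi.single j (1 : 𝕜) by rw [← Pi.single_smul', smul_eq_mul,
    mul_one], map_smul, smul_eq_mul, mul_comm]

theorem mul_coordGrad_of_pow_mul_prod_eq_one {f : (ι → 𝕜) → 𝕜} {x : ι → 𝕜} {m : ℕ}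
    (hf : DifferentiableAt 𝕜 f x) (h : ∀ᶠ y in 𝓝 x, f y ^ m * ∏ i, y i = 1) (i : ι) :
    m * x i * coordGrad f x i = -f x := by
  rw [coordGrad]
  have hderiv := (hf.hasFDerivAt.pow m).mul
    (HasFDerivAt.finsetProd (u := Finset.univ) fun j _ => hasFDerivAt_apply j x)
  have hconst : (fun y => f y ^ m * ∏ i, y i) =ᶠ[𝓝 x] fun _ => 1 := h
  have hzero := congrArg (· (Pi.single i 1)) (hderiv.fderiv.symm.trans
    (hconst.fderiv_eq.trans (fderiv_const_apply 1)))
  simp only [nsmul_eq_mul, add_apply, smul_apply, sum_apply, ContinuousLinearMap.proj_apply,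
    Pi.single_apply, smul_eq_mul, mul_ite, mul_one, mul_zero, Finset.sum_ite_eq', Finset.mem_univ,
    ↓reduceIte, zero_apply] at hzero
  have hx : f x ^ m * ∏ j, x j = 1 := h.self_of_nhds
  have hpow : (m : 𝕜) * f x ^ (m - 1) * f x = m * f x ^ m := by
    cases m <;> simp [pow_succ, mul_assoc]
  rw [← Finset.mul_prod_erase _ _ (Finset.mem_univ i)] at hx hzero
  linear_combination (f x * x i) * hzero - (f x + m * x i * fderiv 𝕜 f x (Pi.single i 1)) * hx -
    (x i * (∏ j ∈ Finset.univ.erase i, x j) * x i * fderiv 𝕜 f x (Pi.single i 1)) * hpow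

theorem coordGrad_dotProduct_of_pow_mul_prod_eq_one {f : (ι → 𝕜) → 𝕜} {x : ι → 𝕜} {m : ℕ}
    (hf : DifferentiableAt 𝕜 f x) (h : ∀ᶠ y in 𝓝 x, f y ^ m * ∏ i, y i = 1) :
    m * (coordGrad f x ⬝ᵥ x) = -(Fintype.card ι) * f x := by
  calc (m : 𝕜) * (coordGrad f x ⬝ᵥ x) = ∑ i, m * x i * coordGrad f x i := by
        simp only [dotProduct, Finset.mul_sum]
        exact Finset.sum_congr rfl fun i _ => by ring
    _ = -(Fintype.card ι) * f x := by
        simp [mul_coordGrad_of_pow_mul_prod_eq_one hf h]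

end CoordGrad

open Matrix Complex

theorem e3Bracket_eq_dotProduct_cross (F G : (Fin 3 → ℂ) × (Fin 3 → ℂ) → ℂ)
    (p : (Fin 3 → ℂ) × (Fin 3 → ℂ)) :
    e3Bracket F G p = p.1 ⬝ᵥ (pdJ F p ⨯₃ pdJ G p) +
      p.2 ⬝ᵥ (pdJ F p ⨯₃ pdx G p + pdx F p ⨯₃ pdJ G p) := by
  simp only [e3Bracket, eps, Fin.sum_univ_three, Fin.val_zero, Fin.val_one, Fin.val_two,
    Nat.cast_zero, Nat.cast_one, Nat.cast_ofNat, Int.reduceSub, Int.reduceMul, Int.reduceDiv,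
    Int.reduceNeg, Int.cast_zero, Int.cast_one, Int.cast_neg, dotProduct, cross_apply,
    cons_val_zero, cons_val_one, cons_val, Pi.add_apply]
  ring

noncomputable def jtildeVec (a : ℂ) (f : (Fin 3 → ℂ) → ℂ) (p : (Fin 3 → ℂ) × (Fin 3 → ℂ)) :
    Fin 3 → ℂ :=
  fun k => Jtilde a f k p

section Jtilde

variable {a : ℂ} {f : (Fin 3 → ℂ) → ℂ} {J x : Fin 3 → ℂ}

theorem jtildeVec_eq : jtildeVec a f = fun p => p.1 + (I * a * f p.2) • p.2 := by
  ext p k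
  simp [jtildeVec, Jtilde]

theorem hasFDerivAt_jtildeVec (hf : DifferentiableAt ℂ f x) :
    HasFDerivAt (jtildeVec a f)
      (ContinuousLinearMap.fst ℂ _ _ + (I * a) • (f x • ContinuousLinearMap.snd ℂ _ _ +
        ((fderiv ℂ f x).comp (ContinuousLinearMap.snd ℂ _ _)).smulRight x)) (J, x) := by
  rw [jtildeVec_eq]
  refine (hasFDerivAt_fst.add (((hf.hasFDerivAt.comp (J, x) hasFDerivAt_snd).const_mul
    (I * a)).smul hasFDerivAt_snd)).congr_fderiv ?_
  ext v <;> simp only [ContinuousLinearMap.add_comp, ContinuousLinearMap.fst_comp_inl,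
    ContinuousLinearMap.fst_comp_inr, ContinuousLinearMap.smul_comp,
    ContinuousLinearMap.snd_comp_inl, ContinuousLinearMap.snd_comp_inr, smul_zero, zero_add,
    _root_.add_apply, _root_.smul_apply, ContinuousLinearMap.id_apply,
    ContinuousLinearMap.comp_apply, ContinuousLinearMap.inl_apply, ContinuousLinearMap.inr_apply,
    ContinuousLinearMap.smulRight_apply, ContinuousLinearMap.coe_snd', map_zero, smul_eq_mul,
    mul_zero, zero_smul, Pi.add_apply, Pi.zero_apply, Pi.smul_apply, add_zero, smul_add]
  ring

variable {Φ : (Fin 3 → ℂ) → ℂ}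

theorem pdJ_comp_jtildeVec (hf : DifferentiableAt ℂ f x)
    (hΦ : DifferentiableAt ℂ Φ (jtildeVec a f (J, x))) :
    pdJ (fun p => Φ (jtildeVec a f p)) (J, x) = coordGrad Φ (jtildeVec a f (J, x)) := by
  ext i
  rw [pdJ, show (fun p => Φ (jtildeVec a f p)) = Φ ∘ jtildeVec a f from rfl,
    (hΦ.hasFDerivAt.comp (J, x) (hasFDerivAt_jtildeVec hf)).fderiv]
  simp [coordGrad]

theorem pdx_comp_jtildeVec (hf : DifferentiableAt ℂ f x)
    (hΦ : DifferentiableAt ℂ Φ (jtildeVec a f (J, x))) :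
    pdx (fun p => Φ (jtildeVec a f p)) (J, x) =
      (I * a) • (f x • coordGrad Φ (jtildeVec a f (J, x)) +
        (coordGrad Φ (jtildeVec a f (J, x)) ⬝ᵥ x) • coordGrad f x) := by
  ext i
  rw [pdx, show (fun p => Φ (jtildeVec a f p)) = Φ ∘ jtildeVec a f from rfl,
    (hΦ.hasFDerivAt.comp (J, x) (hasFDerivAt_jtildeVec hf)).fderiv]
  simp only [smul_add, ContinuousLinearMap.comp_add, ContinuousLinearMap.comp_smulₛₗ,
    RingHom.id_apply, _root_.add_apply, ContinuousLinearMap.comp_apply,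
    ContinuousLinearMap.coe_fst', map_zero, _root_.smul_apply, ContinuousLinearMap.coe_snd',
    smul_eq_mul, ContinuousLinearMap.smulRight_apply, map_smul, zero_add, Pi.smul_apply,
    Pi.add_apply, coordGrad]
  rw [fderiv_apply_eq_coordGrad_dotProduct Φ (jtildeVec a f (J, x)) x]
  ring

end Jtilde

theorem coordGrad_sum_sq (v : Fin 3 → ℂ) :
    coordGrad (fun w : Fin 3 → ℂ => w 0 ^ 2 + w 1 ^ 2 + w 2 ^ 2) v = (2 : ℂ) • v := by
  have hsq (k : Fin 3) := (hasFDerivAt_apply (𝕜 := ℂ) k v).pow 2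
  have h : HasFDerivAt (fun w : Fin 3 → ℂ => w 0 ^ 2 + w 1 ^ 2 + w 2 ^ 2) _ v :=
    ((hsq 0).add (hsq 1)).add (hsq 2)
  ext i
  rw [coordGrad, h.fderiv]
  fin_cases i <;> simp

theorem dotProduct_cross_shift_eq_zero {R : Type*} [CommRing R] (J x A B D : Fin 3 → R) (c g : R)
    (hA : A = (2 : R) • (J + (c * g) • x)) (hx : x ⬝ᵥ x = 0) (hD : D ⬝ᵥ x = -g) :
    J ⬝ᵥ (A ⨯₃ B) + x ⬝ᵥ (A ⨯₃ (c • (g • B + (B ⬝ᵥ x) • D)) + (c • (g • A + (A ⬝ᵥ x) • D)) ⨯₃ B)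
      = 0 := by
  have key : J ⬝ᵥ (A ⨯₃ B) + x ⬝ᵥ (A ⨯₃ (c • (g • B + (B ⬝ᵥ x) • D)) +
      (c • (g • A + (A ⬝ᵥ x) • D)) ⨯₃ B) =
      2 * c * (x ⬝ᵥ ((J + (c * g) • x) ⨯₃ B)) * (D ⬝ᵥ x + g) -
        2 * c * (D ⬝ᵥ ((J + (c * g) • x) ⨯₃ B)) * (x ⬝ᵥ x) := by
    subst hA
    simp only [dotProduct, smul_add, map_add, map_smul, LinearMap.add_apply, LinearMap.smul_apply,
      cross_apply, smul_cons, smul_eq_mul, smul_empty, Pi.add_apply, Fin.sum_univ_three,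
      cons_val_zero, cons_val_one, cons_val, Pi.smul_apply, add_cons, head_cons, tail_cons,
      empty_add_empty]
    ring
  rw [key, hx, hD]
  ring

theorem e3Bracket_sum_sq_jtilde_eq_zero {a : ℂ} {f : (Fin 3 → ℂ) → ℂ}
    {J x : Fin 3 → ℂ} {Ψ : (Fin 3 → ℂ) → ℂ} (hf : DifferentiableAt ℂ f x)
    (hΨ : DifferentiableAt ℂ Ψ (jtildeVec a f (J, x))) (hEuler : coordGrad f x ⬝ᵥ x = -f x)
    (hx : x ⬝ᵥ x = 0) :
    e3Bracket (fun p => Jtilde a f 0 p ^ 2 + Jtilde a f 1 p ^ 2 + Jtilde a f 2 p ^ 2)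
      (fun p => Ψ (jtildeVec a f p)) (J, x) = 0 := by
  have hΦ : DifferentiableAt ℂ (fun w : Fin 3 → ℂ => w 0 ^ 2 + w 1 ^ 2 + w 2 ^ 2)
      (jtildeVec a f (J, x)) := by fun_prop
  change e3Bracket (fun p => (fun w : Fin 3 → ℂ => w 0 ^ 2 + w 1 ^ 2 + w 2 ^ 2) (jtildeVec a f p))
    _ (J, x) = 0
  rw [e3Bracket_eq_dotProduct_cross, pdJ_comp_jtildeVec hf hΦ, pdx_comp_jtildeVec hf hΦ,
    pdJ_comp_jtildeVec hf hΨ, pdx_comp_jtildeVec hf hΨ, coordGrad_sum_sq]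
  exact dotProduct_cross_shift_eq_zero J x _ _ _ _ _ (by rw [jtildeVec_eq]) hx hEuler

/-- The deformed spherical top obtained from the shift `J ↦ J + i a (x₁x₂x₃)^{-1/3} x`
is completely integrable on the orbits with `c₁ = 0`: the Lie–Poisson bracket of
`H̃ = J̃₁² + J̃₂² + J̃₃²` and `K̃ = J̃₁J̃₂J̃₃` vanishes on the zero level set
`x₁² + x₂² + x₃² = 0` of the first Casimir. -/
theorem deformed_spherical_top_integrable_c1_zero
    (a : ℂ) (U : Set (Fin 3 → ℂ)) (hU : IsOpen U)
    (f : (Fin 3 → ℂ) → ℂ) (hf : DifferentiableOn ℂ f U)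
    (hf3 : ∀ x ∈ U, f x ^ 3 * (x 0 * x 1 * x 2) = 1) :
    ∀ (J : Fin 3 → ℂ) (x : Fin 3 → ℂ), x ∈ U →
      x 0 ^ 2 + x 1 ^ 2 + x 2 ^ 2 = 0 →
      e3Bracket
        (fun p => Jtilde a f 0 p ^ 2 + Jtilde a f 1 p ^ 2 + Jtilde a f 2 p ^ 2)
        (fun p => Jtilde a f 0 p * Jtilde a f 1 p * Jtilde a f 2 p)
        (J, x) = 0 := by
  intro J x hxU hc₁
  have hfx : DifferentiableAt ℂ f x := hf.differentiableAt (hU.mem_nhds hxU)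
  have hEuler : coordGrad f x ⬝ᵥ x = -f x := by
    have h3 := coordGrad_dotProduct_of_pow_mul_prod_eq_one (m := 3) hfx <|
      eventually_of_mem (hU.mem_nhds hxU) fun y hy => by
        simpa [Fin.prod_univ_three] using hf3 y hy
    simp only [Fintype.card_fin, Nat.cast_ofNat] at h3
    linear_combination h3 / 3
  exact e3Bracket_sum_sq_jtilde_eq_zero (Ψ := fun w => w 0 * w 1 * w 2) hfx
    (by fun_prop) hEuler (by simp only [dotProduct, Fin.sum_univ_three]; linear_combination hc₁)
end

section
/- Let γ ∈ ℝ, let G ∈ M₃(ℝ) be a constant symmetric matrix (G = Gᵀ), and let F : (α,β) → M₃(ℝ) be a twice differentiable matrix-valued function satisfying Fᵀ(t) F̈(t) + |det F(t)|^{1−γ} G = 0 for all t. Then the vorticity matrix K(t) = Fᵀ(t) Ḟ(t) − Ḟᵀ(t) F(t) is constant in t (its time derivative vanishes identically). -/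
/-!
Differentiating `K = Fᵀ Ḟ - Ḟᵀ F`, the two `Ḟᵀ Ḟ` terms cancel and `K̇ = Fᵀ F̈ - (Fᵀ F̈)ᵀ`.
The equation of motion makes `Fᵀ F̈ = -|det F|^{1-γ} G` symmetric, so `K̇ = 0`.
-/

open Matrix

attribute [local instance] Matrix.frobeniusNormedAddCommGroup Matrix.frobeniusNormedSpace

variable {𝕜 : Type*} [NontriviallyNormedField 𝕜] [CompleteSpace 𝕜] {l m n : Type*}
  [Fintype l] [Fintype m] [Fintype n]

theorem HasDerivAt.matrix_transpose {A : 𝕜 → Matrix m n 𝕜} {A' : Matrix m n 𝕜} {t : 𝕜}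
    (hA : HasDerivAt A A' t) : HasDerivAt (fun s => (A s)ᵀ) A'ᵀ t :=
  (LinearMap.toContinuousLinearMap
    (transposeLinearEquiv m n 𝕜 𝕜).toLinearMap).hasFDerivAt.comp_hasDerivAt t hA

theorem HasDerivAt.matrix_mul {A : 𝕜 → Matrix l m 𝕜} {B : 𝕜 → Matrix m n 𝕜}
    {A' : Matrix l m 𝕜} {B' : Matrix m n 𝕜} {t : 𝕜}
    (hA : HasDerivAt A A' t) (hB : HasDerivAt B B' t) :
    HasDerivAt (fun s => A s * B s) (A' * B t + A t * B') t := by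
  let mulCLM : Matrix l m 𝕜 →L[𝕜] Matrix m n 𝕜 →L[𝕜] Matrix l n 𝕜 :=
    LinearMap.toContinuousLinearMap
      (LinearMap.toContinuousLinearMap.toLinearMap ∘ₗ mulLinearMap 𝕜)
  rw [add_comm]
  exact mulCLM.hasDerivAt_of_bilinear (fun _ => hA) (fun _ => hB)

namespace Matrix

def vorticity (F V : Matrix m n 𝕜) : Matrix n n 𝕜 := Fᵀ * V - Vᵀ * F

theorem hasDerivAt_vorticity {F V : 𝕜 → Matrix m n 𝕜} {V' : Matrix m n 𝕜} {t : 𝕜}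
    (hF : HasDerivAt F (V t) t) (hV : HasDerivAt V V' t) :
    HasDerivAt (fun s => vorticity (F s) (V s)) ((F t)ᵀ * V' - ((F t)ᵀ * V')ᵀ) t := by
  have h := (hF.matrix_transpose.matrix_mul hV).sub (hV.matrix_transpose.matrix_mul hF)
  refine h.congr_deriv ?_
  rw [transpose_mul, transpose_transpose]
  abel

theorem hasDerivAt_vorticity_zero_of_isSymm {F V : 𝕜 → Matrix m n 𝕜} {V' : Matrix m n 𝕜}
    {t : 𝕜} (hF : HasDerivAt F (V t) t) (hV : HasDerivAt V V' t)
    (hsymm : ((F t)ᵀ * V').IsSymm) :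
    HasDerivAt (fun s => vorticity (F s) (V s)) 0 t := by
  simpa only [hsymm.eq, sub_self] using hasDerivAt_vorticity hF hV

end Matrix

/-- For a twice differentiable curve `F(t)` of 3×3 real matrices satisfying the
gas-cloud equations `Fᵀ F̈ + |det F|^{1−γ} G = 0` with a constant symmetric matrix `G`,
the vorticity matrix `K = Fᵀ Ḟ − Ḟᵀ F` is a constant of motion: its time
derivative vanishes identically on the interval. -/
theorem vorticity_conserved (γ α β : ℝ) (G : Matrix (Fin 3) (Fin 3) ℝ)
    (hG : G = Gᵀ)
    (F F' F'' : ℝ → Matrix (Fin 3) (Fin 3) ℝ)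
    (hF' : ∀ t ∈ Set.Ioo α β, HasDerivAt F (F' t) t)
    (hF'' : ∀ t ∈ Set.Ioo α β, HasDerivAt F' (F'' t) t)
    (heq : ∀ t ∈ Set.Ioo α β,
      (F t)ᵀ * F'' t + |(F t).det| ^ (1 - γ) • G = 0) :
    ∀ t ∈ Set.Ioo α β,
      HasDerivAt (fun s => (F s)ᵀ * F' s - (F' s)ᵀ * F s)
        (0 : Matrix (Fin 3) (Fin 3) ℝ) t := by
  intro t ht
  have hsymm : ((F t)ᵀ * F'' t).IsSymm := by
    rw [eq_neg_of_add_eq_zero_left (heq t ht)]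
    exact (IsSymm.smul hG.symm _).neg
  exact hasDerivAt_vorticity_zero_of_isSymm (hF' t ht) (hF'' t ht) hsymm
end

section
/- Let a₁, a₂, a₃ ∈ ℝ, A = diag(a₁,a₂,a₃), and let J, x : ℝ → ℝ³ be differentiable curves satisfying the Neumann equations dJ/dt = x × z and dx/dt = −J × x, where z = −A x and × is the cross product in ℝ³. Define the 3×3 matrices 𝒥(t) with rows [[0, −J₃, J₂], [J₃, 0, −J₁], [−J₂, J₁, 0]] and 𝒳(t) with entries 𝒳_{ij} = x_i x_j. Then for every λ ∈ ℝ with λ ≠ 0, the matrices L(λ,t) = λ A + 𝒥(t) + λ^{-1} 𝒳(t) and M(λ,t) = −λ^{-1} 𝒳(t) satisfy the Lax equation dL/dt = L M − M L. -/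
/-
Along the flow, `ẋ = -𝒥x` with `𝒥` antisymmetric, so `𝒳 = xxᵀ` evolves by `d𝒳/dt = 𝒳𝒥 - 𝒥𝒳`,
while `d𝒥/dt` is the antisymmetric matrix of `x × z`, which is `𝒳A - A𝒳`. On the other side,
`[L, M] = -λ⁻¹[L, 𝒳] = [𝒳, A] + λ⁻¹[𝒳, 𝒥]` because `𝒳` commutes with itself, and the two
sides agree power by power in `λ`.
-/

open Matrix

attribute [local instance] Matrix.frobeniusNormedAddCommGroup Matrix.frobeniusNormedSpace

/-- The cross product in `ℝ³`. -/
def cross (u v : Fin 3 → ℝ) : Fin 3 → ℝ :=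
  ![u 1 * v 2 - u 2 * v 1, u 2 * v 0 - u 0 * v 2, u 0 * v 1 - u 1 * v 0]

/-- The antisymmetric matrix of angular momentum for the Neumann system. -/
def Jmat (J : Fin 3 → ℝ) : Matrix (Fin 3) (Fin 3) ℝ :=
  !![0, -J 2, J 1; J 2, 0, -J 0; -J 1, J 0, 0]

/-- The symmetric matrix of coordinates `𝒳_{ij} = x_i x_j` for the Neumann system. -/
def Xmat (x : Fin 3 → ℝ) : Matrix (Fin 3) (Fin 3) ℝ :=
  Matrix.of fun i j => x i * x j

/-- The Lax matrix `L(λ) = λ diag(a₁,a₂,a₃) + 𝒥 + λ⁻¹ 𝒳` of the Neumann system. -/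
noncomputable def LaxL (a : Fin 3 → ℝ) (lam : ℝ) (J x : Fin 3 → ℝ) :
    Matrix (Fin 3) (Fin 3) ℝ :=
  lam • Matrix.diagonal a + Jmat J + lam⁻¹ • Xmat x

/-- The second Lax matrix `M(λ) = −λ⁻¹ 𝒳` of the Neumann system. -/
noncomputable def LaxM (lam : ℝ) (x : Fin 3 → ℝ) : Matrix (Fin 3) (Fin 3) ℝ :=
  -(lam⁻¹ • Xmat x)

section MatrixCalculus

variable {m n : Type*} [Fintype n] {t : ℝ}

-- The Frobenius norm induces the product topology definitionally, so derivatives are entrywise.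
theorem hasDerivAt_matrix_iff {f : ℝ → Matrix m n ℝ} {f' : Matrix m n ℝ} :
    HasDerivAt f f' t ↔ ∀ i j, HasDerivAt (fun s => f s i j) (f' i j) t :=
  (hasDerivAt_pi (φ := fun s i => f s i)).trans (forall_congr' fun _ => hasDerivAt_pi)

theorem HasDerivAt.vecMulVec {u : ℝ → m → ℝ} {v : ℝ → n → ℝ} {u' : m → ℝ} {v' : n → ℝ}
    (hu : HasDerivAt u u' t) (hv : HasDerivAt v v' t) :
    HasDerivAt (fun s => vecMulVec (u s) (v s)) (vecMulVec u' (v t) + vecMulVec (u t) v') t :=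
  hasDerivAt_matrix_iff.2 fun i j => (hasDerivAt_pi.1 hu i).mul (hasDerivAt_pi.1 hv j)

end MatrixCalculus

theorem Jmat_mulVec (u v : Fin 3 → ℝ) : Jmat u *ᵥ v = cross u v := by
  ext i
  fin_cases i <;> simp [Jmat, cross, mulVec, dotProduct, Fin.sum_univ_three] <;> ring

theorem Jmat_transpose (u : Fin 3 → ℝ) : (Jmat u)ᵀ = -Jmat u := by
  ext i j
  fin_cases i <;> fin_cases j <;> simp [Jmat]

theorem neg_Jmat_mulVec (u v : Fin 3 → ℝ) : -(Jmat u *ᵥ v) = v ᵥ* Jmat u := by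
  rw [← mulVec_transpose, Jmat_transpose, neg_mulVec]

def jmatLinearMap : (Fin 3 → ℝ) →ₗ[ℝ] Matrix (Fin 3) (Fin 3) ℝ where
  toFun := Jmat
  map_add' u v := by ext i j; fin_cases i <;> fin_cases j <;> simp [Jmat] <;> ring
  map_smul' c u := by ext i j; fin_cases i <;> fin_cases j <;> simp [Jmat]

theorem hasDerivAt_Jmat {J : ℝ → Fin 3 → ℝ} {J' : Fin 3 → ℝ} {t : ℝ} (hJ : HasDerivAt J J' t) :
    HasDerivAt (fun s => Jmat (J s)) (Jmat J') t :=
  (LinearMap.toContinuousLinearMap jmatLinearMap).hasFDerivAt.comp_hasDerivAt t hJ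

theorem Jmat_cross_neg_diagonal (a x : Fin 3 → ℝ) :
    Jmat (cross x (fun i => -(a i) * x i)) = Xmat x * diagonal a - diagonal a * Xmat x := by
  ext i j
  fin_cases i <;> fin_cases j <;> simp [Jmat, Xmat, cross, mul_apply, diagonal] <;> ring

theorem LaxL_mul_LaxM_sub (a J x : Fin 3 → ℝ) {lam : ℝ} (hlam : lam ≠ 0) :
    LaxL a lam J x * LaxM lam x - LaxM lam x * LaxL a lam J x =
      Xmat x * diagonal a - diagonal a * Xmat x + lam⁻¹ • (Xmat x * Jmat J - Jmat J * Xmat x) := by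
  simp only [LaxL, LaxM, mul_neg, neg_mul, add_mul, mul_add, smul_mul_assoc, mul_smul_comm]
  match_scalars <;> simp [hlam]

theorem hasDerivAt_Xmat_of_neg_cross {x : ℝ → Fin 3 → ℝ} {J : Fin 3 → ℝ} {t : ℝ}
    (hx : HasDerivAt x (-(cross J (x t))) t) :
    HasDerivAt (fun s => Xmat (x s)) (Xmat (x t) * Jmat J - Jmat J * Xmat (x t)) t := by
  convert hx.vecMulVec hx using 1
  · rfl
  rw [← Jmat_mulVec, neg_vecMulVec, ← mul_vecMulVec, neg_Jmat_mulVec, ← vecMulVec_mul]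
  exact sub_eq_neg_add _ _

/-- The Neumann equations `dJ/dt = x × z`, `dx/dt = −J × x` with `z = −diag(a₁,a₂,a₃)x`
are equivalent to the Lax equation `dL/dt = [L, M] = LM − ML` for every `λ ≠ 0`. -/
theorem neumann_lax_representation (a : Fin 3 → ℝ)
    (J x : ℝ → Fin 3 → ℝ)
    (hJ : ∀ t, HasDerivAt J (cross (x t) (fun i => -(a i) * x t i)) t)
    (hx : ∀ t, HasDerivAt x (-(cross (J t) (x t))) t) :
    ∀ lam : ℝ, lam ≠ 0 → ∀ t : ℝ,
      HasDerivAt (fun s => LaxL a lam (J s) (x s))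
        (LaxL a lam (J t) (x t) * LaxM lam (x t) -
          LaxM lam (x t) * LaxL a lam (J t) (x t)) t := by
  intro lam hlam t
  have hL := ((hasDerivAt_const t (lam • diagonal a)).add (hasDerivAt_Jmat (hJ t))).add
    ((hasDerivAt_Xmat_of_neg_cross (hx t)).const_smul lam⁻¹)
  rwa [zero_add, Jmat_cross_neg_diagonal, ← LaxL_mul_LaxM_sub _ _ _ hlam] at hL
end

section
/- Let a ∈ ℝ and let J, y : ℝ → ℝ³ be differentiable curves with y₁(u) y₂(u) y₃(u) = 1 for all u, satisfying dJ/du = (a²/2)(y × y⁻¹) and dy/du = −(1/2)(J × y⁻¹), where y⁻¹ = (1/y₁, 1/y₂, 1/y₃). Then the second integral of motion K(u) = J₁(u) J₂(u) J₃(u) + a² ( J₁(u)/y₁(u) + J₂(u)/y₂(u) + J₃(u)/y₃(u) ) is constant in u. -/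
/-- `diag (cof v)` is the adjugate of `diag v`. -/
def cof (v : Fin 3 → ℝ) : Fin 3 → ℝ := ![v 1 * v 2, v 0 * v 2, v 0 * v 1]

theorem inv_eq_cof {v : Fin 3 → ℝ} (hv : v 0 * v 1 * v 2 = 1) : (fun i => (v i)⁻¹) = cof v := by
  funext i
  fin_cases i <;> refine (eq_inv_of_mul_eq_one_left ?_).symm <;>
    simp only [cof, Fin.zero_eta, Fin.mk_one, Fin.reduceFinMk, Matrix.cons_val, Matrix.cons_val_zero,
      Matrix.cons_val_one] <;>
    linear_combination hv

def secondIntegral (a : ℝ) (J y : Fin 3 → ℝ) : ℝ :=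
  J 0 * J 1 * J 2 + a ^ 2 * (J 0 * (y 1 * y 2) + J 1 * (y 0 * y 2) + J 2 * (y 0 * y 1))

theorem secondIntegral_eq (a : ℝ) {J y : Fin 3 → ℝ} (hy : y 0 * y 1 * y 2 = 1) :
    J 0 * J 1 * J 2 + a ^ 2 * (J 0 / y 0 + J 1 / y 1 + J 2 / y 2) = secondIntegral a J y := by
  simp [secondIntegral, div_eq_mul_inv, congrFun (inv_eq_cof hy), cof]

/-- The differential of `secondIntegral a` at `(J, y)`, applied to the tangent vector `(J', y')`. -/
def secondIntegralDeriv (a : ℝ) (J y J' y' : Fin 3 → ℝ) : ℝ :=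
  J' 0 * J 1 * J 2 + J 0 * J' 1 * J 2 + J 0 * J 1 * J' 2 +
    a ^ 2 * (J' 0 * (y 1 * y 2) + J' 1 * (y 0 * y 2) + J' 2 * (y 0 * y 1) +
      J 0 * (y' 1 * y 2 + y 1 * y' 2) + J 1 * (y' 0 * y 2 + y 0 * y' 2) +
      J 2 * (y' 0 * y 1 + y 0 * y' 1))

theorem hasDerivAt_secondIntegral (a : ℝ) {J y : ℝ → Fin 3 → ℝ} {J' y' : Fin 3 → ℝ} {u : ℝ}
    (hJ : HasDerivAt J J' u) (hy : HasDerivAt y y' u) :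
    HasDerivAt (fun t => secondIntegral a (J t) (y t))
      (secondIntegralDeriv a (J u) (y u) J' y') u := by
  have hJi := hasDerivAt_pi.mp hJ
  have hyi := hasDerivAt_pi.mp hy
  have h := (((hJi 0).fun_mul (hJi 1)).fun_mul (hJi 2)).fun_add <|
    ((((hJi 0).fun_mul ((hyi 1).fun_mul (hyi 2))).fun_add
      ((hJi 1).fun_mul ((hyi 0).fun_mul (hyi 2)))).fun_add
        ((hJi 2).fun_mul ((hyi 0).fun_mul (hyi 1)))).const_mul (a ^ 2)
  exact h.congr_deriv (by unfold secondIntegralDeriv; ring)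

theorem secondIntegralDeriv_flow_eq_zero (a : ℝ) (J y : Fin 3 → ℝ) :
    secondIntegralDeriv a J y ((a ^ 2 / 2) • cross y (cof y)) (-((1 : ℝ) / 2) • cross J (cof y))
      = 0 := by
  simp only [secondIntegralDeriv, cross, cof, Matrix.cons_val, Matrix.cons_val_one, Matrix.cons_val_zero,
    Pi.smul_apply, smul_eq_mul]
  ring

/-- Along the flow `dJ/du = (a²/2)(y × y⁻¹)`, `dy/du = −(1/2)(J × y⁻¹)` of the
deformed spherical top with `y₁y₂y₃ = 1`, the second integral of motion
`K = J₁J₂J₃ + a²(J₁/y₁ + J₂/y₂ + J₃/y₃)` is constant in `u`. -/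
theorem deformed_top_second_integral_conserved (a : ℝ)
    (J y : ℝ → Fin 3 → ℝ)
    (hy1 : ∀ u, y u 0 * y u 1 * y u 2 = 1)
    (hJ : ∀ u, HasDerivAt J ((a ^ 2 / 2) • cross (y u) (fun i => (y u i)⁻¹)) u)
    (hy : ∀ u, HasDerivAt y (-((1 : ℝ) / 2) • cross (J u) (fun i => (y u i)⁻¹)) u) :
    ∀ u₁ u₂ : ℝ,
      J u₁ 0 * J u₁ 1 * J u₁ 2
          + a ^ 2 * (J u₁ 0 / y u₁ 0 + J u₁ 1 / y u₁ 1 + J u₁ 2 / y u₁ 2) =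
        J u₂ 0 * J u₂ 1 * J u₂ 2
          + a ^ 2 * (J u₂ 0 / y u₂ 0 + J u₂ 1 / y u₂ 1 + J u₂ 2 / y u₂ 2) := by
  have hK : ∀ u, HasDerivAt (fun t => secondIntegral a (J t) (y t)) 0 u := fun u => by
    have h := hasDerivAt_secondIntegral a (hJ u) (hy u)
    rwa [inv_eq_cof (hy1 u), secondIntegralDeriv_flow_eq_zero] at h
  intro u₁ u₂
  rw [secondIntegral_eq a (hy1 u₁), secondIntegral_eq a (hy1 u₂)]
  exact is_const_of_deriv_eq_zero (fun u => (hK u).differentiableAt) (fun u => (hK u).deriv) u₁ u₂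
end

section
/- Let a ∈ ℝ and let J, y : ℝ → ℝ³ be differentiable curves with y₁(u), y₂(u), y₃(u) ≠ 0 for all u, satisfying dJ/du = (a²/2)(y × y⁻¹) and dy/du = −(1/2)(J × y⁻¹), where y⁻¹ = (1/y₁, 1/y₂, 1/y₃). Then the product y₁(u) y₂(u) y₃(u) is constant in u. In particular, the constraint y₁y₂y₃ = 1 defining the natural variables is preserved by the flow. -/
open Finset Matrix

theorem cross_eq_crossProduct (u v : Fin 3 → ℝ) : cross u v = u ⨯₃ v := rfl

theorem HasDerivAt.prod_apply_of_ne_zero {ι 𝕜 : Type*} [Fintype ι]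
    [NontriviallyNormedField 𝕜] {y : 𝕜 → ι → 𝕜} {y' : ι → 𝕜} {u : 𝕜}
    (h : HasDerivAt y y' u) (hy : ∀ i, y u i ≠ 0) :
    HasDerivAt (fun t => ∏ i, y t i) ((∏ i, y u i) * ((y u)⁻¹ ⬝ᵥ y')) u := by
  classical
  refine (HasDerivAt.fun_finsetProd (u := univ) fun i _ => hasDerivAt_pi.mp h i).congr_deriv ?_
  rw [dotProduct, mul_sum]
  refine sum_congr rfl fun i _ => ?_
  rw [← mul_prod_erase univ (y u) (mem_univ i), Pi.inv_apply, smul_eq_mul]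
  field_simp [hy i]

theorem deformed_top_product_conserved_general
    (J y : ℝ → Fin 3 → ℝ)
    (hy0 : ∀ u, y u 0 ≠ 0 ∧ y u 1 ≠ 0 ∧ y u 2 ≠ 0)
    (hy : ∀ u, HasDerivAt y (-((1 : ℝ) / 2) • cross (J u) (fun i => (y u i)⁻¹)) u) :
    ∀ u₁ u₂ : ℝ, y u₁ 0 * y u₁ 1 * y u₁ 2 = y u₂ 0 * y u₂ 1 * y u₂ 2 := by
  have hprod : ∀ u, HasDerivAt (fun t => ∏ i, y t i) 0 u := by
    intro u
    have hne : ∀ i, y u i ≠ 0 := by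
      obtain ⟨h0, h1, h2⟩ := hy0 u
      intro i; fin_cases i <;> assumption
    refine ((hy u).prod_apply_of_ne_zero hne).congr_deriv ?_
    rw [cross_eq_crossProduct, dotProduct_smul, ← Pi.inv_def, dot_cross_self, smul_zero, mul_zero]
  intro u₁ u₂
  simpa only [Fin.prod_univ_three] using
    is_const_of_deriv_eq_zero (fun u => (hprod u).differentiableAt) (fun u => (hprod u).deriv) u₁ u₂

/-- Along the flow `dJ/du = (a²/2)(y × y⁻¹)`, `dy/du = −(1/2)(J × y⁻¹)` of the
deformed spherical top (with `y₁,y₂,y₃ ≠ 0`), the product `y₁y₂y₃` is constant in `u`;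
in particular the constraint `y₁y₂y₃ = 1` defining the natural variables is preserved
by the flow. -/
theorem deformed_top_product_conserved (a : ℝ)
    (J y : ℝ → Fin 3 → ℝ)
    (hy0 : ∀ u, y u 0 ≠ 0 ∧ y u 1 ≠ 0 ∧ y u 2 ≠ 0)
    (hJ : ∀ u, HasDerivAt J ((a ^ 2 / 2) • cross (y u) (fun i => (y u i)⁻¹)) u)
    (hy : ∀ u, HasDerivAt y (-((1 : ℝ) / 2) • cross (J u) (fun i => (y u i)⁻¹)) u) :
    ∀ u₁ u₂ : ℝ, y u₁ 0 * y u₁ 1 * y u₁ 2 = y u₂ 0 * y u₂ 1 * y u₂ 2 :=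
  deformed_top_product_conserved_general J y hy0 hy
end

section
/- Let a ∈ ℝ and let J, y : ℝ → ℝ³ be differentiable curves with y₁(u) y₂(u) y₃(u) = 1 for all u, satisfying dJ/du = (a²/2)(y × y⁻¹) and dy/du = −(1/2)(J × y⁻¹), where y⁻¹ = (1/y₁, 1/y₂, 1/y₃). Define the Flaschka-type variables s₁ = y₁⁻², s₂ = y₃⁻², s₃ = y₂⁻², s₄ = y₃ J₃, s₅ = y₂ J₂, s₆ = y₁ J₁. Then these satisfy the Toda-like system ds₁/du = s₁(s₅ − s₄), ds₂/du = s₂(s₆ − s₅), ds₃/du = s₃(s₄ − s₆), ds₄/du = (a²/2)(s₃ − s₁) + (s₄/2)(s₅ − s₆), ds₅/du = (a²/2)(s₁ − s₂) + (s₅/2)(s₆ − s₄), ds₆/du = (a²/2)(s₂ − s₃) + (s₆/2)(s₄ − s₅). In particular the equations for s₁, s₂, s₃ coincide exactly with the corresponding equations of the three-body Toda lattice in Flaschka variables, and the equations for s₄, s₅, s₆ differ from Toda's only by at most quadratic polynomial terms. -/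
/-!
Writing `sᵢ = yᵢJᵢ` and using `yᵢyⱼyₖ = 1` for a cyclic triple `(i, j, k)` to replace `1/yₖ` by
`yᵢyⱼ`, the equations of motion become `yᵢ' = -(1/2) yᵢ (sⱼ - sₖ)` and
`Jᵢ' = (a²/2)(yⱼ/yₖ - yₖ/yⱼ)`. Hence `(yᵢ⁻²)' = yᵢ⁻² (sⱼ - sₖ)`, and since `yᵢyⱼ/yₖ = yₖ⁻²`,
`sᵢ' = (a²/2)(yₖ⁻² - yⱼ⁻²) + (sᵢ/2)(sₖ - sⱼ)`. The system is invariant under the cyclic shift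
`i ↦ i + 1`, so each of the six equations is an instance of one of these two.
-/

theorem cross_apply_cyclic (v w : Fin 3 → ℝ) (i : Fin 3) :
    cross v w i = v (i + 1) * w (i + 2) - v (i + 2) * w (i + 1) := by
  fin_cases i <;> rfl

theorem prod_cyclic_eq_one {M : Type*} [CommMonoid M] {x : Fin 3 → M}
    (hx : x 0 * x 1 * x 2 = 1) (i : Fin 3) : x i * x (i + 1) * x (i + 2) = 1 := by
  rw [← hx]
  fin_cases i
  · rfl
  · exact (mul_rotate _ _ _).symm
  · exact mul_rotate _ _ _

theorem apply_ne_zero_of_prod_eq_one {M : Type*} [CommMonoidWithZero M] [Nontrivial M]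
    {x : Fin 3 → M} (hx : x 0 * x 1 * x 2 = 1) (i : Fin 3) : x i ≠ 0 :=
  left_ne_zero_of_mul (left_ne_zero_of_mul_eq_one (prod_cyclic_eq_one hx i))

section DeformedTop

variable {a u : ℝ} {J y : ℝ → Fin 3 → ℝ}

theorem hasDerivAt_y_apply_cyclic (hprod : y u 0 * y u 1 * y u 2 = 1)
    (hy : HasDerivAt y (-((1 : ℝ) / 2) • cross (J u) (fun i => (y u i)⁻¹)) u) (i : Fin 3) :
    HasDerivAt (fun u => y u i)
      (-(1 / 2) * y u i * (y u (i + 1) * J u (i + 1) - y u (i + 2) * J u (i + 2))) u := by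
  have hj := apply_ne_zero_of_prod_eq_one hprod (i + 1)
  have hk := apply_ne_zero_of_prod_eq_one hprod (i + 2)
  refine (hasDerivAt_pi.1 hy i).congr_deriv ?_
  rw [Pi.smul_apply, cross_apply_cyclic, smul_eq_mul]
  field_simp
  linear_combination
    (y u (i + 1) * J u (i + 1) - y u (i + 2) * J u (i + 2)) * prod_cyclic_eq_one hprod i

theorem hasDerivAt_J_apply_cyclic
    (hJ : HasDerivAt J ((a ^ 2 / 2) • cross (y u) (fun i => (y u i)⁻¹)) u) (i : Fin 3) :
    HasDerivAt (fun u => J u i)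
      (a ^ 2 / 2 * (y u (i + 1) * (y u (i + 2))⁻¹ - y u (i + 2) * (y u (i + 1))⁻¹)) u := by
  simpa only [Pi.smul_apply, cross_apply_cyclic, smul_eq_mul] using hasDerivAt_pi.1 hJ i

theorem hasDerivAt_inv_sq_cyclic (hprod : y u 0 * y u 1 * y u 2 = 1)
    (hy : HasDerivAt y (-((1 : ℝ) / 2) • cross (J u) (fun i => (y u i)⁻¹)) u) (i : Fin 3) :
    HasDerivAt (fun u => (y u i ^ 2)⁻¹)
      ((y u i ^ 2)⁻¹ * (y u (i + 1) * J u (i + 1) - y u (i + 2) * J u (i + 2))) u := by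
  have hi := apply_ne_zero_of_prod_eq_one hprod i
  refine (((hasDerivAt_y_apply_cyclic hprod hy i).fun_pow 2).fun_inv
    (pow_ne_zero 2 hi)).congr_deriv ?_
  field_simp
  ring

theorem hasDerivAt_mul_cyclic (hprod : y u 0 * y u 1 * y u 2 = 1)
    (hJ : HasDerivAt J ((a ^ 2 / 2) • cross (y u) (fun i => (y u i)⁻¹)) u)
    (hy : HasDerivAt y (-((1 : ℝ) / 2) • cross (J u) (fun i => (y u i)⁻¹)) u) (i : Fin 3) :
    HasDerivAt (fun u => y u i * J u i)
      (a ^ 2 / 2 * ((y u (i + 2) ^ 2)⁻¹ - (y u (i + 1) ^ 2)⁻¹)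
        + y u i * J u i / 2 * (y u (i + 2) * J u (i + 2) - y u (i + 1) * J u (i + 1))) u := by
  have hj := apply_ne_zero_of_prod_eq_one hprod (i + 1)
  have hk := apply_ne_zero_of_prod_eq_one hprod (i + 2)
  refine ((hasDerivAt_y_apply_cyclic hprod hy i).fun_mul
    (hasDerivAt_J_apply_cyclic hJ i)).congr_deriv ?_
  field_simp
  linear_combination a ^ 2 * (y u (i + 1) ^ 2 - y u (i + 2) ^ 2) * prod_cyclic_eq_one hprod i

end DeformedTop

/-- In the Flaschka-type variables `s₁ = y₁⁻²`, `s₂ = y₃⁻²`, `s₃ = y₂⁻²`,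
`s₄ = y₃J₃`, `s₅ = y₂J₂`, `s₆ = y₁J₁`, the flow `dJ/du = (a²/2)(y × y⁻¹)`,
`dy/du = −(1/2)(J × y⁻¹)` of the deformed spherical top (with `y₁y₂y₃ = 1`)
becomes the Toda-like system
`ds₁/du = s₁(s₅ − s₄)`, `ds₂/du = s₂(s₆ − s₅)`, `ds₃/du = s₃(s₄ − s₆)`,
`ds₄/du = (a²/2)(s₃ − s₁) + (s₄/2)(s₅ − s₆)`,
`ds₅/du = (a²/2)(s₁ − s₂) + (s₅/2)(s₆ − s₄)`,
`ds₆/du = (a²/2)(s₂ − s₃) + (s₆/2)(s₄ − s₅)`. -/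
theorem deformed_top_flaschka_variables (a : ℝ)
    (J y : ℝ → Fin 3 → ℝ)
    (hy1 : ∀ u, y u 0 * y u 1 * y u 2 = 1)
    (hJ : ∀ u, HasDerivAt J ((a ^ 2 / 2) • cross (y u) (fun i => (y u i)⁻¹)) u)
    (hy : ∀ u, HasDerivAt y (-((1 : ℝ) / 2) • cross (J u) (fun i => (y u i)⁻¹)) u) :
    ∀ u : ℝ,
      (HasDerivAt (fun u => (y u 0 ^ 2)⁻¹)
        ((y u 0 ^ 2)⁻¹ * (y u 1 * J u 1 - y u 2 * J u 2)) u) ∧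
      (HasDerivAt (fun u => (y u 2 ^ 2)⁻¹)
        ((y u 2 ^ 2)⁻¹ * (y u 0 * J u 0 - y u 1 * J u 1)) u) ∧
      (HasDerivAt (fun u => (y u 1 ^ 2)⁻¹)
        ((y u 1 ^ 2)⁻¹ * (y u 2 * J u 2 - y u 0 * J u 0)) u) ∧
      (HasDerivAt (fun u => y u 2 * J u 2)
        (a ^ 2 / 2 * ((y u 1 ^ 2)⁻¹ - (y u 0 ^ 2)⁻¹)
          + y u 2 * J u 2 / 2 * (y u 1 * J u 1 - y u 0 * J u 0)) u) ∧
      (HasDerivAt (fun u => y u 1 * J u 1)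
        (a ^ 2 / 2 * ((y u 0 ^ 2)⁻¹ - (y u 2 ^ 2)⁻¹)
          + y u 1 * J u 1 / 2 * (y u 0 * J u 0 - y u 2 * J u 2)) u) ∧
      (HasDerivAt (fun u => y u 0 * J u 0)
        (a ^ 2 / 2 * ((y u 2 ^ 2)⁻¹ - (y u 1 ^ 2)⁻¹)
          + y u 0 * J u 0 / 2 * (y u 2 * J u 2 - y u 1 * J u 1)) u) := by
  intro u
  exact ⟨hasDerivAt_inv_sq_cyclic (hy1 u) (hy u) 0, hasDerivAt_inv_sq_cyclic (hy1 u) (hy u) 2,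
    hasDerivAt_inv_sq_cyclic (hy1 u) (hy u) 1, hasDerivAt_mul_cyclic (hy1 u) (hJ u) (hy u) 2,
    hasDerivAt_mul_cyclic (hy1 u) (hJ u) (hy u) 1, hasDerivAt_mul_cyclic (hy1 u) (hJ u) (hy u) 0⟩
end

section
/- Let a ∈ ℝ and let s : ℝ → ℝ⁶ be a differentiable curve satisfying the Toda-like system ds₁/du = s₁(s₅ − s₄), ds₂/du = s₂(s₆ − s₅), ds₃/du = s₃(s₄ − s₆), ds₄/du = (a²/2)(s₃ − s₁) + (s₄/2)(s₅ − s₆), ds₅/du = (a²/2)(s₁ − s₂) + (s₅/2)(s₆ − s₄), ds₆/du = (a²/2)(s₂ − s₃) + (s₆/2)(s₄ − s₅). Then each of the four quantities S₁ = s₁ s₂ s₃, S₂ = s₄ + s₅ + s₆, S₃ = s₄² s₂ + s₅² s₃ + s₆² s₁ − a² (s₁ s₂ + s₁ s₃ + s₂ s₃), S₄ = s₄ s₅ s₆ + a² (s₁ s₆ + s₂ s₄ + s₃ s₅) is constant along the flow. -/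
/-! Differentiating each `Sᵢ` along a solution by the product rule and substituting the
equations of motion gives a polynomial in `s` and `a` that vanishes identically, so each `Sᵢ`
has zero derivative along the flow. -/

theorem eq_of_forall_hasDerivAt_zero {𝕜 G : Type*} [RCLike 𝕜] [NormedAddCommGroup G]
    [NormedSpace 𝕜 G] {f : 𝕜 → G} (hf : ∀ x, HasDerivAt f 0 x) (x y : 𝕜) : f x = f y :=
  is_const_of_deriv_eq_zero (fun x ↦ (hf x).differentiableAt) (fun x ↦ (hf x).deriv) x y

namespace TodaLike

/-- Coordinates are indexed from `0`: `x i` is the paper's `s_{i+1}`. -/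
noncomputable def field (a : ℝ) (x : Fin 6 → ℝ) : Fin 6 → ℝ :=
  ![x 0 * (x 4 - x 3),
    x 1 * (x 5 - x 4),
    x 2 * (x 3 - x 5),
    a ^ 2 / 2 * (x 2 - x 0) + x 3 / 2 * (x 4 - x 5),
    a ^ 2 / 2 * (x 0 - x 1) + x 4 / 2 * (x 5 - x 3),
    a ^ 2 / 2 * (x 1 - x 2) + x 5 / 2 * (x 3 - x 4)]

def S₁ (x : Fin 6 → ℝ) : ℝ := x 0 * x 1 * x 2

def S₂ (x : Fin 6 → ℝ) : ℝ := x 3 + x 4 + x 5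

def S₃ (a : ℝ) (x : Fin 6 → ℝ) : ℝ :=
  x 3 ^ 2 * x 1 + x 4 ^ 2 * x 2 + x 5 ^ 2 * x 0 - a ^ 2 * (x 0 * x 1 + x 0 * x 2 + x 1 * x 2)

def S₄ (a : ℝ) (x : Fin 6 → ℝ) : ℝ :=
  x 3 * x 4 * x 5 + a ^ 2 * (x 0 * x 5 + x 1 * x 3 + x 2 * x 4)

section Flow

variable {a : ℝ} {s : ℝ → Fin 6 → ℝ} (hs : ∀ u, HasDerivAt s (field a (s u)) u) (u : ℝ)

include hs

theorem hasDerivAt_S₁ : HasDerivAt (fun u ↦ S₁ (s u)) 0 u := by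
  have h i := hasDerivAt_pi.mp (hs u) i
  refine (((h 0).mul (h 1)).mul (h 2)).congr_deriv ?_
  simp only [field, Matrix.cons_val, Matrix.cons_val_zero, Matrix.cons_val_one, Pi.mul_apply]
  ring

theorem hasDerivAt_S₂ : HasDerivAt (fun u ↦ S₂ (s u)) 0 u := by
  have h i := hasDerivAt_pi.mp (hs u) i
  refine (((h 3).add (h 4)).add (h 5)).congr_deriv ?_
  simp only [field, Matrix.cons_val]
  ring

theorem hasDerivAt_S₃ : HasDerivAt (fun u ↦ S₃ a (s u)) 0 u := by
  have h i := hasDerivAt_pi.mp (hs u) i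
  refine (((((h 3).pow 2).mul (h 1)).add (((h 4).pow 2).mul (h 2))).add
      (((h 5).pow 2).mul (h 0)) |>.sub
      ((((h 0).mul (h 1)).add ((h 0).mul (h 2))).add ((h 1).mul (h 2)) |>.const_mul (a ^ 2))
    ).congr_deriv ?_
  simp only [field, Matrix.cons_val, Matrix.cons_val_zero, Matrix.cons_val_one,
    Pi.pow_apply, Nat.cast_ofNat, Nat.add_one_sub_one, pow_one]
  ring

theorem hasDerivAt_S₄ : HasDerivAt (fun u ↦ S₄ a (s u)) 0 u := by
  have h i := hasDerivAt_pi.mp (hs u) i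
  refine ((((h 3).mul (h 4)).mul (h 5)).add
      ((((h 0).mul (h 5)).add ((h 1).mul (h 3))).add ((h 2).mul (h 4)) |>.const_mul (a ^ 2))
    ).congr_deriv ?_
  simp only [field, Matrix.cons_val, Matrix.cons_val_zero, Matrix.cons_val_one, Pi.mul_apply]
  ring

end Flow

end TodaLike

/-- Along the Toda-like flow of the deformed spherical top in Flaschka-type variables,
`ds₁/du = s₁(s₅ − s₄)`, `ds₂/du = s₂(s₆ − s₅)`, `ds₃/du = s₃(s₄ − s₆)`,
`ds₄/du = (a²/2)(s₃ − s₁) + (s₄/2)(s₅ − s₆)`,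
`ds₅/du = (a²/2)(s₁ − s₂) + (s₅/2)(s₆ − s₄)`,
`ds₆/du = (a²/2)(s₂ − s₃) + (s₆/2)(s₄ − s₅)`,
each of the four quantities `S₁ = s₁s₂s₃`, `S₂ = s₄ + s₅ + s₆`,
`S₃ = s₄²s₂ + s₅²s₃ + s₆²s₁ − a²(s₁s₂ + s₁s₃ + s₂s₃)`,
`S₄ = s₄s₅s₆ + a²(s₁s₆ + s₂s₄ + s₃s₅)` is constant along the flow. -/
theorem toda_like_flow_invariants (a : ℝ)
    (s : ℝ → Fin 6 → ℝ)
    (hs : ∀ u, HasDerivAt s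
      ![s u 0 * (s u 4 - s u 3),
        s u 1 * (s u 5 - s u 4),
        s u 2 * (s u 3 - s u 5),
        a ^ 2 / 2 * (s u 2 - s u 0) + s u 3 / 2 * (s u 4 - s u 5),
        a ^ 2 / 2 * (s u 0 - s u 1) + s u 4 / 2 * (s u 5 - s u 3),
        a ^ 2 / 2 * (s u 1 - s u 2) + s u 5 / 2 * (s u 3 - s u 4)] u) :
    ∀ u₁ u₂ : ℝ,
      (s u₁ 0 * s u₁ 1 * s u₁ 2 = s u₂ 0 * s u₂ 1 * s u₂ 2) ∧
      (s u₁ 3 + s u₁ 4 + s u₁ 5 = s u₂ 3 + s u₂ 4 + s u₂ 5) ∧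
      (s u₁ 3 ^ 2 * s u₁ 1 + s u₁ 4 ^ 2 * s u₁ 2 + s u₁ 5 ^ 2 * s u₁ 0
          - a ^ 2 * (s u₁ 0 * s u₁ 1 + s u₁ 0 * s u₁ 2 + s u₁ 1 * s u₁ 2) =
        s u₂ 3 ^ 2 * s u₂ 1 + s u₂ 4 ^ 2 * s u₂ 2 + s u₂ 5 ^ 2 * s u₂ 0
          - a ^ 2 * (s u₂ 0 * s u₂ 1 + s u₂ 0 * s u₂ 2 + s u₂ 1 * s u₂ 2)) ∧
      (s u₁ 3 * s u₁ 4 * s u₁ 5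
          + a ^ 2 * (s u₁ 0 * s u₁ 5 + s u₁ 1 * s u₁ 3 + s u₁ 2 * s u₁ 4) =
        s u₂ 3 * s u₂ 4 * s u₂ 5
          + a ^ 2 * (s u₂ 0 * s u₂ 5 + s u₂ 1 * s u₂ 3 + s u₂ 2 * s u₂ 4)) := by
  intro u₁ u₂
  exact ⟨eq_of_forall_hasDerivAt_zero (TodaLike.hasDerivAt_S₁ hs) u₁ u₂,
    eq_of_forall_hasDerivAt_zero (TodaLike.hasDerivAt_S₂ hs) u₁ u₂,
    eq_of_forall_hasDerivAt_zero (TodaLike.hasDerivAt_S₃ hs) u₁ u₂,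
    eq_of_forall_hasDerivAt_zero (TodaLike.hasDerivAt_S₄ hs) u₁ u₂⟩
end

section
/- Let a ∈ ℝ, J ∈ ℝ³, and y ∈ ℝ³ with y₁, y₂, y₃ ≠ 0 and y₁ y₂ y₃ = 1. Define s₁ = y₁⁻², s₂ = y₃⁻², s₃ = y₂⁻², s₄ = y₃ J₃, s₅ = y₂ J₂, s₆ = y₁ J₁. Then: (i) s₁ s₂ s₃ = 1; (ii) s₄ + s₅ + s₆ = J₁ y₁ + J₂ y₂ + J₃ y₃; (iii) s₄² s₂ + s₅² s₃ + s₆² s₁ − a²(s₁ s₂ + s₁ s₃ + s₂ s₃) = J₁² + J₂² + J₃² − a²(y₁² + y₂² + y₃²) = H; (iv) s₄ s₅ s₆ + a²(s₁ s₆ + s₂ s₄ + s₃ s₅) = J₁ J₂ J₃ + a²(J₁/y₁ + J₂/y₂ + J₃/y₃) = K. That is, under the Flaschka-type change of variables the invariant quantities S₁, S₂, S₃, S₄ coincide respectively with the constraint, the Casimir (J,y), the Hamiltonian H and the second integral K of the deformed spherical top. -/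
/-! On the surface `y₁y₂y₃ = 1` each `yᵢ⁻¹` is the product of the other two coordinates, so all
four identities become polynomial. Writing `p = y₁y₂y₃`, their two sides then differ by a
multiple of `p - 1`. -/

section

variable {α : Type*} [DivisionCommMonoid α] {x y z : α}

theorem inv_eq_mul_of_mul_mul_eq_one_left (h : x * y * z = 1) : x⁻¹ = y * z :=
  inv_eq_of_mul_eq_one_right (by rw [← mul_assoc, h])

theorem inv_eq_mul_of_mul_mul_eq_one_mid (h : x * y * z = 1) : y⁻¹ = x * z :=
  inv_eq_mul_of_mul_mul_eq_one_left (by rw [← h, mul_comm y x])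

theorem inv_eq_mul_of_mul_mul_eq_one_right (h : x * y * z = 1) : z⁻¹ = x * y :=
  inv_eq_of_mul_eq_one_left h

end

theorem flaschka_variables_invariants_general (a : ℝ) (J y : Fin 3 → ℝ)
    (hprod : y 0 * y 1 * y 2 = 1) :
    ((y 0 ^ 2)⁻¹ * (y 2 ^ 2)⁻¹ * (y 1 ^ 2)⁻¹ = 1) ∧
    (y 2 * J 2 + y 1 * J 1 + y 0 * J 0 =
      J 0 * y 0 + J 1 * y 1 + J 2 * y 2) ∧
    ((y 2 * J 2) ^ 2 * (y 2 ^ 2)⁻¹ + (y 1 * J 1) ^ 2 * (y 1 ^ 2)⁻¹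
        + (y 0 * J 0) ^ 2 * (y 0 ^ 2)⁻¹
        - a ^ 2 * ((y 0 ^ 2)⁻¹ * (y 2 ^ 2)⁻¹ + (y 0 ^ 2)⁻¹ * (y 1 ^ 2)⁻¹
            + (y 2 ^ 2)⁻¹ * (y 1 ^ 2)⁻¹) =
      J 0 ^ 2 + J 1 ^ 2 + J 2 ^ 2 - a ^ 2 * (y 0 ^ 2 + y 1 ^ 2 + y 2 ^ 2)) ∧
    ((y 2 * J 2) * (y 1 * J 1) * (y 0 * J 0)
        + a ^ 2 * ((y 0 ^ 2)⁻¹ * (y 0 * J 0) + (y 2 ^ 2)⁻¹ * (y 2 * J 2)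
            + (y 1 ^ 2)⁻¹ * (y 1 * J 1)) =
      J 0 * J 1 * J 2 + a ^ 2 * (J 0 / y 0 + J 1 / y 1 + J 2 / y 2)) := by
  simp only [← inv_pow, div_eq_mul_inv, inv_eq_mul_of_mul_mul_eq_one_left hprod,
    inv_eq_mul_of_mul_mul_eq_one_mid hprod, inv_eq_mul_of_mul_mul_eq_one_right hprod]
  set p := y 0 * y 1 * y 2
  refine ⟨?_, by ring, ?_, ?_⟩
  · linear_combination (p + 1) * (p ^ 2 + 1) * hprod
  · linear_combination
      (p + 1) * (J 0 ^ 2 + J 1 ^ 2 + J 2 ^ 2 - a ^ 2 * (y 0 ^ 2 + y 1 ^ 2 + y 2 ^ 2)) * hprod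
  · linear_combination
      (J 0 * J 1 * J 2 + a ^ 2 * (J 0 * (y 1 * y 2) + J 1 * (y 0 * y 2) + J 2 * (y 0 * y 1)))
        * hprod

/-- Under the Flaschka-type change of variables `s₁ = y₁⁻²`, `s₂ = y₃⁻²`, `s₃ = y₂⁻²`,
`s₄ = y₃J₃`, `s₅ = y₂J₂`, `s₆ = y₁J₁` (with `y₁y₂y₃ = 1` and `y₁,y₂,y₃ ≠ 0`), the
quantities `S₁, S₂, S₃, S₄` coincide respectively with the constraint `1`, the Casimir
`(J,y)`, the Hamiltonian `H = (J,J) − a²(y,y)` and the second integral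
`K = J₁J₂J₃ + a²(J₁/y₁ + J₂/y₂ + J₃/y₃)` of the deformed spherical top. -/
theorem flaschka_variables_invariants (a : ℝ) (J y : Fin 3 → ℝ)
    (hy0 : y 0 ≠ 0) (hy1 : y 1 ≠ 0) (hy2 : y 2 ≠ 0)
    (hprod : y 0 * y 1 * y 2 = 1) :
    ((y 0 ^ 2)⁻¹ * (y 2 ^ 2)⁻¹ * (y 1 ^ 2)⁻¹ = 1) ∧
    (y 2 * J 2 + y 1 * J 1 + y 0 * J 0 =
      J 0 * y 0 + J 1 * y 1 + J 2 * y 2) ∧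
    ((y 2 * J 2) ^ 2 * (y 2 ^ 2)⁻¹ + (y 1 * J 1) ^ 2 * (y 1 ^ 2)⁻¹
        + (y 0 * J 0) ^ 2 * (y 0 ^ 2)⁻¹
        - a ^ 2 * ((y 0 ^ 2)⁻¹ * (y 2 ^ 2)⁻¹ + (y 0 ^ 2)⁻¹ * (y 1 ^ 2)⁻¹
            + (y 2 ^ 2)⁻¹ * (y 1 ^ 2)⁻¹) =
      J 0 ^ 2 + J 1 ^ 2 + J 2 ^ 2 - a ^ 2 * (y 0 ^ 2 + y 1 ^ 2 + y 2 ^ 2)) ∧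
    ((y 2 * J 2) * (y 1 * J 1) * (y 0 * J 0)
        + a ^ 2 * ((y 0 ^ 2)⁻¹ * (y 0 * J 0) + (y 2 ^ 2)⁻¹ * (y 2 * J 2)
            + (y 1 ^ 2)⁻¹ * (y 1 * J 1)) =
      J 0 * J 1 * J 2 + a ^ 2 * (J 0 / y 0 + J 1 / y 1 + J 2 / y 2)) :=
  flaschka_variables_invariants_general a J y hprod
end
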